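/- arXiv:2405.16541 — 4 statements merged into one kernel-verified Lean document; each statement's English description precedes it below -/
import Mathlib

section
/- Let d ≥ 1 be an integer and v ≥ 0 a real number. For every coupling μ of χ_d with itself, the negative monotone coupling μ_NM satisfies ∫ c_RLF dμ_NM ≤ ∫ c_RLF dμ. That is, among all probability measures on ℝ × ℝ with both marginals equal to χ_d, the negative monotone coupling minimizes the expected cost c_RLF. -/
/-!
Expanding `c_RLF` as a power series in `x² + y²` with nonnegative coefficients, and then
binomially, writes the cost on `[0, ∞)²` as a nonnegative combination of products `g x * h y`
of nondecreasing functions. By the layer-cake formula, `∫ g(x) h(y) dμ` is an integral of masses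
`μ (U ×ˢ V)` of products of upper sets. Every coupling satisfies the Fréchet bound
`μ (U ×ˢ V) ≥ ν U + ν V - 1`, and the negative monotone coupling attains it: `F⁻¹ u ∈ U` forces
`u ≥ ν Uᶜ`, and `F⁻¹ (1 - u) ∈ V` forces `u ≤ 1 - ν Vᶜ`.
-/

open MeasureTheory ProbabilityTheory

noncomputable section

def stdGaussian (d : ℕ) : Measure (EuclideanSpace ℝ (Fin d)) :=
  (Measure.pi fun _ : Fin d => gaussianReal 0 1).map
    (EuclideanSpace.equiv (Fin d) ℝ).symm

def chi (d : ℕ) : Measure ℝ := (stdGaussian d).map fun x => ‖x‖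

def chiCDF (d : ℕ) (x : ℝ) : ℝ := (chi d (Set.Iic x)).toReal

def chiQuantile (d : ℕ) (u : ℝ) : ℝ := sInf {x : ℝ | u ≤ chiCDF d x}

def muNM (d : ℕ) : Measure (ℝ × ℝ) :=
  ((volume : Measure ℝ).restrict (Set.Icc 0 1)).map
    fun u => (chiQuantile d u, chiQuantile d (1 - u))

def cRLF (d : ℕ) (v : ℝ) (x y : ℝ) : ℝ :=
  ∑' k : ℕ,
    v ^ (2 * k) * (x ^ 2 + y ^ 2) ^ k /
      (4 ^ k * (Nat.factorial k) * Real.Gamma ((k : ℝ) + d / 2))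

open Set Filter

section Quantile

variable {ν : Measure ℝ} {u x : ℝ}

def quantile (ν : Measure ℝ) (u : ℝ) : ℝ := sInf {x | u ≤ cdf ν x}

theorem quantile_le_iff (hu0 : 0 < u) (hu1 : u < 1) : quantile ν u ≤ x ↔ u ≤ cdf ν x := by
  set S := {x | u ≤ cdf ν x}
  have hne : S.Nonempty := ((tendsto_cdf_atTop ν).eventually_const_le hu1).exists
  have hbdd : BddBelow S := by
    obtain ⟨x₀, hx₀⟩ := eventually_atBot.1 ((tendsto_cdf_atBot ν).eventually_lt_const hu0)
    exact ⟨x₀, fun x hx => le_of_not_ge fun hle => (hx₀ x hle).not_ge hx⟩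
  -- `S` is an upper set, so right-continuity of the cdf puts `sInf S` in `S`.
  have hmem : u ≤ cdf ν (sInf S) := by
    refine ge_of_tendsto (((cdf ν).right_continuous _).tendsto.mono_left
      (nhdsWithin_mono _ Ioi_subset_Ici_self)) ?_
    filter_upwards [self_mem_nhdsWithin] with y hy
    obtain ⟨s, hs, hsy⟩ := exists_lt_of_csInf_lt hne hy
    exact hs.trans ((cdf ν).mono hsy.le)
  exact ⟨fun h => hmem.trans ((cdf ν).mono h), fun h => csInf_le hbdd h⟩

theorem lt_quantile_iff (hu0 : 0 < u) (hu1 : u < 1) : x < quantile ν u ↔ cdf ν x < u := by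
  simpa only [not_le] using (quantile_le_iff (x := x) hu0 hu1).not

theorem quantile_monotoneOn : MonotoneOn (quantile ν) (Ioo 0 1) :=
  fun _ hu _ hu' huu' => (quantile_le_iff hu.1 hu.2).2 <|
    huu'.trans ((quantile_le_iff hu'.1 hu'.2).1 le_rfl)

theorem measure_Iio_quantile_le [IsProbabilityMeasure ν] (hu0 : 0 < u) (hu1 : u < 1) :
    ν (Iio (quantile ν u)) ≤ ENNReal.ofReal u := by
  calc ν (Iio (quantile ν u)) = (cdf ν).measure (Iio (quantile ν u)) := by rw [measure_cdf]
    _ = ENNReal.ofReal (Function.leftLim (cdf ν) (quantile ν u)) := by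
      rw [StieltjesFunction.measure_Iio _ (tendsto_cdf_atBot ν), sub_zero]
    _ ≤ ENNReal.ofReal u := by
      refine ENNReal.ofReal_le_ofReal (le_of_tendsto ((cdf ν).mono.tendsto_leftLim _) ?_)
      filter_upwards [self_mem_nhdsWithin] with y hy using ((lt_quantile_iff hu0 hu1).1 hy).le

theorem measureReal_compl_le_of_quantile_mem [IsProbabilityMeasure ν] {U : Set ℝ}
    (hU : IsUpperSet U) (hu0 : 0 < u) (hu1 : u < 1) (h : quantile ν u ∈ U) :
    ν.real Uᶜ ≤ u := by
  have hsub : Uᶜ ⊆ Iio (quantile ν u) := fun y hy => not_le.1 fun hle => hy (hU hle h)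
  exact ENNReal.toReal_le_of_le_ofReal hu0.le
    ((measure_mono hsub).trans (measure_Iio_quantile_le hu0 hu1))

theorem quantile_nonneg [IsProbabilityMeasure ν] (hν : ∀ᵐ y ∂ν, 0 ≤ y) (hu0 : 0 < u)
    (hu1 : u < 1) : 0 ≤ quantile ν u := by
  refine le_of_forall_lt fun y hy => (lt_quantile_iff hu0 hu1).2 ?_
  have hnull : ν (Iic y) = 0 :=
    measure_mono_null (fun z hz => not_le.2 ((mem_Iic.1 hz).trans_lt hy)) (ae_iff.1 hν)
  rwa [cdf_eq_real, measureReal_def, hnull, ENNReal.toReal_zero]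

end Quantile

section LayerCake

theorem ofReal_mul_ofReal_eq_volume_Ioo_prod_Ioo (a b : ℝ) :
    ENNReal.ofReal a * ENNReal.ofReal b = volume (Ioo 0 a ×ˢ Ioo 0 b) := by
  rw [Measure.volume_eq_prod, Measure.prod_prod, Real.volume_Ioo, Real.volume_Ioo, sub_zero,
    sub_zero]

theorem lintegral_ofReal_mul_ofReal_eq_lintegral_measure_prod {α β : Type*} [MeasurableSpace α]
    [MeasurableSpace β] (κ : Measure (α × β)) [SFinite κ] {g : α → ℝ} {h : β → ℝ}
    (hg : Measurable g) (hh : Measurable h) :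
    ∫⁻ p, ENNReal.ofReal (g p.1) * ENNReal.ofReal (h p.2) ∂κ =
      ∫⁻ st : ℝ × ℝ, κ ({x | st.1 ∈ Ioo 0 (g x)} ×ˢ {y | st.2 ∈ Ioo 0 (h y)}) := by
  set E : Set ((α × β) × (ℝ × ℝ)) := {q | q.2 ∈ Ioo 0 (g q.1.1) ×ˢ Ioo 0 (h q.1.2)}
  have hE : MeasurableSet E := by
    simp only [E, mem_prod, mem_Ioo]
    measurability
  calc ∫⁻ p, ENNReal.ofReal (g p.1) * ENNReal.ofReal (h p.2) ∂κ
      = ∫⁻ p, (∫⁻ st : ℝ × ℝ, E.indicator 1 (p, st)) ∂κ := by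
        refine lintegral_congr fun p => ?_
        rw [ofReal_mul_ofReal_eq_volume_Ioo_prod_Ioo, ← lintegral_indicator_one
          (measurableSet_Ioo.prod measurableSet_Ioo)]
        rfl
    _ = ∫⁻ st : ℝ × ℝ, ∫⁻ p, E.indicator 1 (p, st) ∂κ :=
        lintegral_lintegral_swap (by exact (measurable_one.indicator hE).aemeasurable)
    _ = _ := by
        refine lintegral_congr fun st => ?_
        rw [← lintegral_indicator_one]
        · rfl
        · exact ((MeasurableSet.const _).inter (measurableSet_lt measurable_const hg)).prod
            ((MeasurableSet.const _).inter (measurableSet_lt measurable_const hh))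

theorem lintegral_ofReal_mul_ofReal_mono {κ₁ κ₂ : Measure (ℝ × ℝ)} [SFinite κ₁] [SFinite κ₂]
    (hκ : ∀ U V : Set ℝ, IsUpperSet U → IsUpperSet V → κ₁ (U ×ˢ V) ≤ κ₂ (U ×ˢ V))
    {g h : ℝ → ℝ} (hg : Monotone g) (hh : Monotone h) :
    ∫⁻ p, ENNReal.ofReal (g p.1) * ENNReal.ofReal (h p.2) ∂κ₁ ≤
      ∫⁻ p, ENNReal.ofReal (g p.1) * ENNReal.ofReal (h p.2) ∂κ₂ := by
  rw [lintegral_ofReal_mul_ofReal_eq_lintegral_measure_prod _ hg.measurable hh.measurable,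
    lintegral_ofReal_mul_ofReal_eq_lintegral_measure_prod _ hg.measurable hh.measurable]
  exact lintegral_mono fun st => hκ _ _ (fun x y hxy hx => ⟨hx.1, hx.2.trans_le (hg hxy)⟩)
    (fun x y hxy hx => ⟨hx.1, hx.2.trans_le (hh hxy)⟩)

end LayerCake

section NegMonotoneCoupling

variable {ν : Measure ℝ}

def negMonotoneCoupling (ν : Measure ℝ) : Measure (ℝ × ℝ) :=
  (volume.restrict (Icc 0 1)).map fun u => (quantile ν u, quantile ν (1 - u))

theorem negMonotoneCoupling_eq_map_restrict_Ioo :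
    negMonotoneCoupling ν =
      (volume.restrict (Ioo 0 1)).map fun u => (quantile ν u, quantile ν (1 - u)) := by
  rw [negMonotoneCoupling, Measure.restrict_congr_set Ioo_ae_eq_Icc]

theorem aemeasurable_quantile_prod_quantile_one_sub :
    AEMeasurable (fun u => (quantile ν u, quantile ν (1 - u))) (volume.restrict (Ioo 0 1)) := by
  refine (aemeasurable_restrict_of_monotoneOn measurableSet_Ioo quantile_monotoneOn).prodMk
    (aemeasurable_restrict_of_antitoneOn measurableSet_Ioo fun u hu u' hu' huu' => ?_)
  exact quantile_monotoneOn ⟨by linarith [hu'.2], by linarith [hu'.1]⟩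
    ⟨by linarith [hu.2], by linarith [hu.1]⟩ (by linarith)

instance : IsProbabilityMeasure (negMonotoneCoupling ν) := by
  have : IsProbabilityMeasure (volume.restrict (Ioo (0 : ℝ) 1)) := ⟨by simp⟩
  rw [negMonotoneCoupling_eq_map_restrict_Ioo]
  exact Measure.isProbabilityMeasure_map aemeasurable_quantile_prod_quantile_one_sub

theorem negMonotoneCoupling_prod_le_ofReal [IsProbabilityMeasure ν] {U V : Set ℝ}
    (hU : IsUpperSet U) (hV : IsUpperSet V) :
    negMonotoneCoupling ν (U ×ˢ V) ≤ ENNReal.ofReal (1 - ν.real Vᶜ - ν.real Uᶜ) := by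
  rw [negMonotoneCoupling_eq_map_restrict_Ioo,
    Measure.map_apply_of_aemeasurable aemeasurable_quantile_prod_quantile_one_sub
      (hU.ordConnected.measurableSet.prod hV.ordConnected.measurableSet),
    Measure.restrict_apply' measurableSet_Ioo, ← Real.volume_Icc]
  refine measure_mono fun u ⟨⟨hUu, hVu⟩, hu⟩ => ⟨?_, ?_⟩
  · exact measureReal_compl_le_of_quantile_mem hU hu.1 hu.2 hUu
  · linarith [measureReal_compl_le_of_quantile_mem hV (by linarith [hu.2]) (by linarith [hu.1]) hVu]

theorem measureReal_fst_preimage_add_measureReal_snd_preimage_le {α β : Type*}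
    [MeasurableSpace α] [MeasurableSpace β] (μ : Measure (α × β)) [IsProbabilityMeasure μ]
    {A : Set α} {B : Set β} (hB : MeasurableSet B) :
    μ.real (Prod.fst ⁻¹' A) + μ.real (Prod.snd ⁻¹' B) ≤ μ.real (A ×ˢ B) + 1 := by
  rw [← measureReal_union_add_inter (measurable_snd hB), ← Set.prod_eq, add_comm]
  gcongr
  exact measureReal_le_one

theorem negMonotoneCoupling_prod_le [IsProbabilityMeasure ν] (μ : Measure (ℝ × ℝ))
    [IsProbabilityMeasure μ] (h1 : μ.map Prod.fst = ν) (h2 : μ.map Prod.snd = ν)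
    {U V : Set ℝ} (hU : IsUpperSet U) (hV : IsUpperSet V) :
    negMonotoneCoupling ν (U ×ˢ V) ≤ μ (U ×ˢ V) := by
  have hUm := hU.ordConnected.measurableSet
  have hVm := hV.ordConnected.measurableSet
  have hfst : μ.real (Prod.fst ⁻¹' U) = ν.real U := by
    rw [← h1, map_measureReal_apply measurable_fst hUm]
  have hsnd : μ.real (Prod.snd ⁻¹' V) = ν.real V := by
    rw [← h2, map_measureReal_apply measurable_snd hVm]
  have hfrechet := measureReal_fst_preimage_add_measureReal_snd_preimage_le μ (A := U) hVm
  rw [hfst, hsnd] at hfrechet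
  refine (negMonotoneCoupling_prod_le_ofReal hU hV).trans ?_
  rw [← ofReal_measureReal]
  refine ENNReal.ofReal_le_ofReal ?_
  rw [measureReal_compl hUm, measureReal_compl hVm, probReal_univ]
  linarith

theorem lintegral_negMonotoneCoupling_le [IsProbabilityMeasure ν]
    (μ : Measure (ℝ × ℝ)) [IsProbabilityMeasure μ] (h1 : μ.map Prod.fst = ν)
    (h2 : μ.map Prod.snd = ν) {g h : ℝ → ℝ} (hg : Monotone g) (hh : Monotone h) :
    ∫⁻ p, ENNReal.ofReal (g p.1) * ENNReal.ofReal (h p.2) ∂negMonotoneCoupling ν ≤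
      ∫⁻ p, ENNReal.ofReal (g p.1) * ENNReal.ofReal (h p.2) ∂μ :=
  lintegral_ofReal_mul_ofReal_mono
    (fun _ _ hU hV => negMonotoneCoupling_prod_le μ h1 h2 hU hV) hg hh

theorem ae_nonneg_of_map_fst_of_map_snd (hν : ∀ᵐ x ∂ν, 0 ≤ x)
    {μ : Measure (ℝ × ℝ)} (h1 : μ.map Prod.fst = ν) (h2 : μ.map Prod.snd = ν) :
    ∀ᵐ p ∂μ, 0 ≤ p.1 ∧ 0 ≤ p.2 :=
  (ae_of_ae_map measurable_fst.aemeasurable (h1 ▸ hν)).and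
    (ae_of_ae_map measurable_snd.aemeasurable (h2 ▸ hν))

theorem ae_nonneg_negMonotoneCoupling [IsProbabilityMeasure ν]
    (hν : ∀ᵐ x ∂ν, 0 ≤ x) : ∀ᵐ p ∂negMonotoneCoupling ν, 0 ≤ p.1 ∧ 0 ≤ p.2 := by
  rw [negMonotoneCoupling_eq_map_restrict_Ioo, ae_map_iff
    aemeasurable_quantile_prod_quantile_one_sub (by measurability)]
  exact ae_restrict_of_forall_mem measurableSet_Ioo fun u hu =>
    ⟨quantile_nonneg hν hu.1 hu.2, quantile_nonneg hν (by linarith [hu.2]) (by linarith [hu.1])⟩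

end NegMonotoneCoupling

section Cost

open Nat Real

theorem monotone_max_zero_pow (n : ℕ) : Monotone fun x : ℝ => max x 0 ^ n :=
  fun _ _ hxy => pow_le_pow_left₀ (le_max_right _ _) (max_le_max_right 0 hxy) n

theorem summable_pow_div_factorial_mul_Gamma (w : ℝ) {s : ℝ} (hs : 0 ≤ s) :
    Summable fun k : ℕ => w ^ k / (k ! * Gamma (k + s)) := by
  refine (summable_pow_div_factorial ‖w‖).of_norm_bounded_eventually_nat ?_
  filter_upwards [eventually_ge_atTop 2] with k hk
  have hk2 : (2 : ℝ) ≤ k + s := by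
    have : (2 : ℝ) ≤ k := by exact_mod_cast hk
    linarith
  have hΓ : 1 ≤ Gamma (k + s) :=
    Gamma_two ▸ Gamma_strictMonoOn_Ici.monotoneOn self_mem_Ici hk2 hk2
  rw [norm_div, norm_pow, norm_mul, Real.norm_natCast,
    Real.norm_of_nonneg (zero_le_one.trans hΓ)]
  exact div_le_div_of_nonneg_left (by positivity) (by positivity)
    (le_mul_of_one_le_right (by positivity) hΓ)

variable {d : ℕ} {v : ℝ}

def cRLFCoeff (d : ℕ) (v : ℝ) (k : ℕ) : ℝ := v ^ (2 * k) / (4 ^ k * k ! * Gamma (k + d / 2))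

theorem cRLFCoeff_nonneg (k : ℕ) : 0 ≤ cRLFCoeff d v k := by
  rw [cRLFCoeff]
  exact div_nonneg ((even_two_mul k).pow_nonneg v)
    (mul_nonneg (by positivity) (Gamma_nonneg_of_nonneg (by positivity)))

theorem summable_cRLFCoeff_mul_pow (z : ℝ) : Summable fun k => cRLFCoeff d v k * z ^ k := by
  convert summable_pow_div_factorial_mul_Gamma (v ^ 2 * z / 4) (s := d / 2) (by positivity)
    using 2 with k
  rw [cRLFCoeff, div_pow, mul_pow, ← pow_mul]
  ring

theorem cRLF_eq_tsum (x y : ℝ) : cRLF d v x y = ∑' k, cRLFCoeff d v k * (x ^ 2 + y ^ 2) ^ k :=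
  tsum_congr fun k => by rw [cRLFCoeff, mul_div_right_comm]

theorem ofReal_cRLF_eq_tsum {x y : ℝ} (hx : 0 ≤ x) (hy : 0 ≤ y) :
    ENNReal.ofReal (cRLF d v x y) = ∑' k, ∑ j ∈ Finset.range (k + 1),
      ENNReal.ofReal (cRLFCoeff d v k * k.choose j) *
        (ENNReal.ofReal (max x 0 ^ (2 * j)) * ENNReal.ofReal (max y 0 ^ (2 * (k - j)))) := by
  rw [cRLF_eq_tsum, ENNReal.ofReal_tsum_of_nonneg
    (fun k => mul_nonneg (cRLFCoeff_nonneg k) (by positivity)) (summable_cRLFCoeff_mul_pow _),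
    max_eq_left hx, max_eq_left hy]
  refine tsum_congr fun k => ?_
  rw [add_pow, Finset.mul_sum, ENNReal.ofReal_sum_of_nonneg fun j _ => mul_nonneg
    (cRLFCoeff_nonneg k) (by positivity)]
  refine Finset.sum_congr rfl fun j _ => ?_
  rw [← ENNReal.ofReal_mul (by positivity), ← ENNReal.ofReal_mul
    (mul_nonneg (cRLFCoeff_nonneg k) (by positivity)), pow_mul, pow_mul]
  ring_nf

theorem lintegral_ofReal_cRLF (κ : Measure (ℝ × ℝ)) (hκ : ∀ᵐ p ∂κ, 0 ≤ p.1 ∧ 0 ≤ p.2) :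
    ∫⁻ p, ENNReal.ofReal (cRLF d v p.1 p.2) ∂κ = ∑' k, ∑ j ∈ Finset.range (k + 1),
      ENNReal.ofReal (cRLFCoeff d v k * k.choose j) *
        ∫⁻ p, ENNReal.ofReal (max p.1 0 ^ (2 * j)) *
          ENNReal.ofReal (max p.2 0 ^ (2 * (k - j))) ∂κ := by
  rw [lintegral_congr_ae (hκ.mono fun p hp => ofReal_cRLF_eq_tsum hp.1 hp.2),
    lintegral_tsum fun k => by fun_prop]
  refine tsum_congr fun k => ?_
  rw [lintegral_finsetSum _ fun j _ => by fun_prop]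
  exact Finset.sum_congr rfl fun j _ => lintegral_const_mul _ (by fun_prop)

end Cost

instance (d : ℕ) : IsProbabilityMeasure (stdGaussian d) :=
  Measure.isProbabilityMeasure_map (by fun_prop)

instance (d : ℕ) : IsProbabilityMeasure (chi d) :=
  Measure.isProbabilityMeasure_map measurable_norm.aemeasurable

theorem ae_nonneg_chi (d : ℕ) : ∀ᵐ x ∂chi d, 0 ≤ x :=
  (ae_map_iff measurable_norm.aemeasurable measurableSet_Ici).2 (.of_forall fun _ => norm_nonneg _)

theorem muNM_eq_negMonotoneCoupling (d : ℕ) : muNM d = negMonotoneCoupling (chi d) := by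
  have : chiQuantile d = quantile (chi d) := by
    funext u
    simp only [chiQuantile, quantile, chiCDF, cdf_eq_real, measureReal_def]
  rw [muNM, negMonotoneCoupling, this]

theorem negativeMonotone_minimizes_cRLF_general (d : ℕ) (v : ℝ)
    (μ : Measure (ℝ × ℝ)) [IsProbabilityMeasure μ]
    (h1 : μ.map Prod.fst = chi d) (h2 : μ.map Prod.snd = chi d) :
    ∫⁻ p, ENNReal.ofReal (cRLF d v p.1 p.2) ∂(muNM d) ≤
      ∫⁻ p, ENNReal.ofReal (cRLF d v p.1 p.2) ∂μ := by
  rw [muNM_eq_negMonotoneCoupling,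
    lintegral_ofReal_cRLF _ (ae_nonneg_negMonotoneCoupling (ae_nonneg_chi d)),
    lintegral_ofReal_cRLF _ (ae_nonneg_of_map_fst_of_map_snd (ae_nonneg_chi d) h1 h2)]
  exact ENNReal.tsum_le_tsum fun k => Finset.sum_le_sum fun j _ => mul_le_mul_right
    (lintegral_negMonotoneCoupling_le μ h1 h2 (monotone_max_zero_pow _)
      (monotone_max_zero_pow _)) _

/-- Among all couplings of `χ_d` with itself, the negative monotone coupling minimizes the
expected cost `c_RLF`. -/
theorem negativeMonotone_minimizes_cRLF (d : ℕ) (hd : 1 ≤ d) (v : ℝ) (hv : 0 ≤ v)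
    (μ : Measure (ℝ × ℝ)) [IsProbabilityMeasure μ]
    (h1 : μ.map Prod.fst = chi d) (h2 : μ.map Prod.snd = chi d) :
    ∫⁻ p, ENNReal.ofReal (cRLF d v p.1 p.2) ∂(muNM d) ≤
      ∫⁻ p, ENNReal.ofReal (cRLF d v p.1 p.2) ∂μ :=
  negativeMonotone_minimizes_cRLF_general d v μ h1 h2

end
end

section
/- Let d ≥ 2, let Q be Haar-distributed on the orthogonal group O(d), and let a, b ≥ 0 be real numbers and z ∈ ℝ^d. Then E_Q[ cos(a·⟨Q e₁, z⟩) · cos(b·⟨Q e₂, z⟩) ] = Σ_{k=0}^∞ (−1)^k ‖z‖^{2k} (a² + b²)^k · Γ(d/2) / (4^k · k! · Γ(k + d/2)). (This is the expected product of two random Fourier feature basis functions with orthogonal, jointly isotropic frequency directions of fixed norms a and b.) -/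
/-!
Since `cos (a s) cos (b t) = (cos (a s + b t) + cos (a s - b t)) / 2` and
`a ⟪Q e₁, z⟫ ± b ⟪Q e₂, z⟫ = ⟪Q (a e₁ ± b e₂), z⟫`, it suffices to compute `∫ cos ⟪x, z⟫ dν(x)`
for the law `ν` of `Q v`, a rotation-invariant probability measure on the sphere of radius
`r = ‖v‖ = √(a² + b²)`. Expanding the cosine, one needs the even moments `∫ ⟪x, z⟫ ^ 2k dν`;
by rotation invariance they are `‖z‖ ^ 2k c_k`, where `c_k` is the moment of one coordinate.
Integrating `⟪x, z⟫ ^ 2k e^{-‖z‖²}` over `ν ⊗ volume` in both orders determines `c_k`: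
integrating in `z` first gives `r ^ 2k Γ(k + 1/2) π^{(d-1)/2}`, integrating in `x` first gives
`c_k π^{d/2} Γ(k + d/2) / Γ(d/2)`.
-/

open MeasureTheory

noncomputable section

/-- The Borel measurable structure on `d × d` real matrices (the product σ-algebra). -/
instance matrixMeasurableSpace (d : ℕ) : MeasurableSpace (Matrix (Fin d) (Fin d) ℝ) :=
  inferInstanceAs (MeasurableSpace (Fin d → Fin d → ℝ))

open Real Set Module
open scoped Nat InnerProductSpace Matrix

theorem Real.four_pow_mul_factorial_mul_Gamma_nat_add_half (k : ℕ) :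
    4 ^ k * k ! * Gamma (k + 1 / 2) = √π * (2 * k)! := by
  induction k with
  | zero => simp [-one_div, Gamma_one_half_eq]
  | succ k ih =>
    rw [Nat.cast_succ, add_right_comm, Gamma_add_one (by positivity),
      show 2 * (k + 1) = 2 * k + 1 + 1 by ring, Nat.factorial_succ, Nat.factorial_succ,
      Nat.factorial_succ]
    push_cast
    linear_combination (4 * (k + 1) * (k + 1 / 2) : ℝ) * ih

theorem integral_Ioi_pow_mul_exp_neg_sq (m : ℕ) :
    ∫ x in Ioi (0 : ℝ), x ^ m * exp (-x ^ 2) = Gamma ((m + 1) / 2) / 2 := by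
  rw [div_eq_inv_mul, ← one_div,
    ← integral_rpow_mul_exp_neg_rpow two_pos (neg_one_lt_zero.trans_le m.cast_nonneg)]
  refine setIntegral_congr_fun measurableSet_Ioi fun x _ => ?_
  simp only [rpow_natCast, rpow_two]

theorem integral_pow_two_mul_mul_exp_neg_sq (k : ℕ) :
    ∫ x : ℝ, x ^ (2 * k) * exp (-x ^ 2) = Gamma (k + 1 / 2) := by
  have h := integral_comp_abs (f := fun x : ℝ => x ^ (2 * k) * exp (-x ^ 2))
  simp only [(even_two_mul k).pow_abs, sq_abs] at h
  rw [h, integral_Ioi_pow_mul_exp_neg_sq]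
  push_cast
  ring_nf

theorem integrableOn_Ioi_pow_mul_exp_neg_sq (m : ℕ) :
    IntegrableOn (fun x : ℝ => x ^ m * exp (-x ^ 2)) (Ioi 0) := by
  refine (integrableOn_rpow_mul_exp_neg_rpow (neg_one_lt_zero.trans_le m.cast_nonneg)
    two_pos).congr_fun (fun x _ => ?_) measurableSet_Ioi
  simp only [rpow_natCast, rpow_two]

section NormMoments

variable {F : Type*} [NormedAddCommGroup F] [InnerProductSpace ℝ F] [FiniteDimensional ℝ F]
  [MeasurableSpace F] [BorelSpace F] [Nontrivial F]

theorem InnerProductSpace.integrable_norm_pow_mul_exp_neg_norm_sq (m : ℕ) :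
    Integrable fun x : F => ‖x‖ ^ m * exp (-‖x‖ ^ 2) := by
  refine (integrable_fun_norm_addHaar volume (f := fun y => y ^ m * exp (-y ^ 2))).2 ?_
  simpa only [smul_eq_mul, ← mul_assoc, ← pow_add] using
    integrableOn_Ioi_pow_mul_exp_neg_sq (finrank ℝ F - 1 + m)

theorem InnerProductSpace.integral_norm_pow_mul_exp_neg_norm_sq (m : ℕ) :
    ∫ x : F, ‖x‖ ^ m * exp (-‖x‖ ^ 2) =
      √π ^ finrank ℝ F * Gamma ((m + finrank ℝ F) / 2) / Gamma (finrank ℝ F / 2) := by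
  have hd : 1 ≤ finrank ℝ F := finrank_pos
  have hG : 0 < Gamma (finrank ℝ F / 2) := Gamma_pos_of_pos (by positivity)
  rw [integral_fun_norm_addHaar volume (fun y => y ^ m * exp (-y ^ 2))]
  simp only [smul_eq_mul, ← mul_assoc, ← pow_add]
  rw [integral_Ioi_pow_mul_exp_neg_sq, measureReal_def, volume_ball, ENNReal.toReal_mul,
    ENNReal.toReal_pow, ENNReal.toReal_ofReal zero_le_one, ENNReal.toReal_ofReal (by positivity),
    Gamma_add_one (by positivity), nsmul_eq_mul, Nat.cast_add, Nat.cast_sub hd]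
  field_simp
  ring_nf

end NormMoments

section Rotation

variable {F : Type*} [NormedAddCommGroup F] [InnerProductSpace ℝ F]

theorem exists_linearIsometryEquiv_inner_apply_eq_norm_mul (w e : F) (he : ‖e‖ = 1) :
    ∃ g : F ≃ₗᵢ[ℝ] F, ∀ x, ⟪w, g x⟫_ℝ = ‖w‖ * ⟪e, x⟫_ℝ := by
  have hnorm : ‖‖w‖ • e‖ = ‖w‖ := by simp [norm_smul, he]
  refine ⟨Submodule.reflection (ℝ ∙ (‖w‖ • e - w))ᗮ, fun x => ?_⟩
  conv_lhs => arg 2; rw [← Submodule.reflection_sub hnorm]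
  rw [LinearIsometryEquiv.inner_map_map, real_inner_smul_left]

variable [MeasurableSpace F] [BorelSpace F]

theorem integral_comp_inner_eq_norm_mul_of_measurePreserving {ν : Measure F}
    (hν : ∀ g : F ≃ₗᵢ[ℝ] F, MeasurePreserving g ν ν) (f : ℝ → ℝ → ℝ) (w e : F)
    (he : ‖e‖ = 1) :
    ∫ x, f ⟪w, x⟫_ℝ ‖x‖ ∂ν = ∫ x, f (‖w‖ * ⟪e, x⟫_ℝ) ‖x‖ ∂ν := by
  obtain ⟨g, hg⟩ := exists_linearIsometryEquiv_inner_apply_eq_norm_mul w e he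
  rw [← (hν g).integral_comp g.toHomeomorph.measurableEmbedding]
  simp only [hg, LinearIsometryEquiv.norm_map]

theorem integral_inner_pow_eq_norm_pow_mul_of_measurePreserving {ν : Measure F}
    (hν : ∀ g : F ≃ₗᵢ[ℝ] F, MeasurePreserving g ν ν) (z e : F) (he : ‖e‖ = 1) (k : ℕ) :
    ∫ x, ⟪x, z⟫_ℝ ^ k ∂ν = ‖z‖ ^ k * ∫ x, ⟪e, x⟫_ℝ ^ k ∂ν := by
  simp only [real_inner_comm z]
  rw [integral_comp_inner_eq_norm_mul_of_measurePreserving hν (fun s _ => s ^ k) z e he]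
  simp only [mul_pow, integral_const_mul]

end Rotation

namespace EuclideanSpace

variable {ι : Type*} [Fintype ι]

theorem integral_apply_pow_mul_exp_neg_norm_sq (i : ι) (k : ℕ) :
    ∫ x : EuclideanSpace ℝ ι, x i ^ (2 * k) * exp (-‖x‖ ^ 2) =
      Gamma (k + 1 / 2) * √π ^ (Fintype.card ι - 1) := by
  classical
  have hprod : ∀ y : ι → ℝ, y i ^ (2 * k) * exp (-‖WithLp.toLp 2 y‖ ^ 2) =
      ∏ j, (if j = i then y j ^ (2 * k) else 1) * exp (-y j ^ 2) := by
    intro y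
    rw [Finset.prod_mul_distrib, Finset.prod_ite_eq', if_pos (Finset.mem_univ i), ← exp_sum,
      real_norm_sq_eq, ← Finset.sum_neg_distrib]
  have hfactor : ∀ j, ∫ t : ℝ, (if j = i then t ^ (2 * k) else 1) * exp (-t ^ 2) =
      if j = i then Gamma (k + 1 / 2) else √π := by
    intro j
    split_ifs
    · exact integral_pow_two_mul_mul_exp_neg_sq k
    · simpa using integral_gaussian 1
  rw [← (PiLp.volume_preserving_toLp ι).integral_comp
    (MeasurableEquiv.toLp 2 (ι → ℝ)).measurableEmbedding]
  simp only [hprod]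
  rw [integral_fintype_prod_volume_eq_prod
    (fun j (t : ℝ) => (if j = i then t ^ (2 * k) else 1) * exp (-t ^ 2))]
  simp only [hfactor]
  rw [← Finset.mul_prod_erase _ _ (Finset.mem_univ i), if_pos rfl,
    Finset.prod_congr rfl fun j hj => if_neg (Finset.ne_of_mem_erase hj), Finset.prod_const,
    Finset.card_erase_of_mem (Finset.mem_univ i), Finset.card_univ]

theorem integral_inner_pow_mul_exp_neg_norm_sq [Nonempty ι] (w : EuclideanSpace ℝ ι) (k : ℕ) :
    ∫ x : EuclideanSpace ℝ ι, ⟪w, x⟫_ℝ ^ (2 * k) * exp (-‖x‖ ^ 2) =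
      ‖w‖ ^ (2 * k) * (Gamma (k + 1 / 2) * √π ^ (Fintype.card ι - 1)) := by
  classical
  obtain ⟨i⟩ := ‹Nonempty ι›
  rw [integral_comp_inner_eq_norm_mul_of_measurePreserving (fun g => g.measurePreserving)
    (fun s r => s ^ (2 * k) * exp (-r ^ 2)) w (single i 1) (by simp)]
  simp only [inner_single_left, map_one, one_mul, mul_pow, mul_assoc]
  rw [integral_const_mul, integral_apply_pow_mul_exp_neg_norm_sq]

variable {ν : Measure (EuclideanSpace ℝ ι)} [IsProbabilityMeasure ν]

theorem integral_apply_pow_mul_integral_norm_pow_mul_exp_neg_norm_sq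
    (hν : ∀ g : EuclideanSpace ℝ ι ≃ₗᵢ[ℝ] EuclideanSpace ℝ ι, MeasurePreserving g ν ν)
    {r : ℝ} (hr : ∀ᵐ x ∂ν, ‖x‖ = r) (i : ι) (k : ℕ) :
    (∫ x, x i ^ (2 * k) ∂ν) * ∫ z : EuclideanSpace ℝ ι, ‖z‖ ^ (2 * k) * exp (-‖z‖ ^ 2) =
      r ^ (2 * k) * (Gamma (k + 1 / 2) * √π ^ (Fintype.card ι - 1)) := by
  classical
  have : Nonempty ι := ⟨i⟩
  set F : EuclideanSpace ℝ ι → EuclideanSpace ℝ ι → ℝ :=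
    fun x z => ⟪x, z⟫_ℝ ^ (2 * k) * exp (-‖z‖ ^ 2)
  have hpow : (fun x => ‖x‖ ^ (2 * k)) =ᵐ[ν] fun _ => r ^ (2 * k) :=
    hr.mono fun x hx => by simp only [hx]
  have hint : Integrable (Function.uncurry F) (ν.prod volume) := by
    refine (((integrable_const (r ^ (2 * k))).congr hpow.symm).mul_prod
      (InnerProductSpace.integrable_norm_pow_mul_exp_neg_norm_sq (2 * k))).mono'
      (by fun_prop : Continuous (Function.uncurry F)).aestronglyMeasurable
      (ae_of_all _ fun p => ?_)
    rw [Function.uncurry_apply_pair, norm_mul, norm_pow, norm_of_nonneg (exp_pos _).le,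
      ← mul_assoc, ← mul_pow]
    gcongr
    exact abs_real_inner_le_norm _ _
  have hxz : ∫ x, ∫ z, F x z ∂volume ∂ν =
      r ^ (2 * k) * (Gamma (k + 1 / 2) * √π ^ (Fintype.card ι - 1)) := by
    simp only [F, integral_inner_pow_mul_exp_neg_norm_sq, integral_mul_const,
      integral_congr_ae hpow, integral_const, probReal_univ, one_smul]
  have hzx : ∫ z, ∫ x, F x z ∂ν ∂volume =
      (∫ x, x i ^ (2 * k) ∂ν) * ∫ z : EuclideanSpace ℝ ι, ‖z‖ ^ (2 * k) * exp (-‖z‖ ^ 2) := by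
    simp only [F, integral_mul_const,
      integral_inner_pow_eq_norm_pow_mul_of_measurePreserving hν _ (single i 1) (by simp),
      inner_single_left, map_one, one_mul]
    rw [← integral_const_mul]
    congr 1 with z
    ring
  rw [← hzx, ← integral_integral_swap hint, hxz]

theorem integral_inner_pow_of_measurePreserving [Nonempty ι]
    (hν : ∀ g : EuclideanSpace ℝ ι ≃ₗᵢ[ℝ] EuclideanSpace ℝ ι, MeasurePreserving g ν ν)
    {r : ℝ} (hr : ∀ᵐ x ∂ν, ‖x‖ = r) (z : EuclideanSpace ℝ ι) (k : ℕ) :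
    ∫ x, ⟪x, z⟫_ℝ ^ (2 * k) ∂ν = (r * ‖z‖) ^ (2 * k) * (2 * k)! * Gamma (Fintype.card ι / 2) /
      (4 ^ k * k ! * Gamma (k + Fintype.card ι / 2)) := by
  classical
  obtain ⟨i⟩ := ‹Nonempty ι›
  have hmoment := integral_apply_pow_mul_integral_norm_pow_mul_exp_neg_norm_sq hν hr i k
  rw [integral_inner_pow_eq_norm_pow_mul_of_measurePreserving hν z (single i 1) (by simp)]
  simp only [inner_single_left, map_one, one_mul]
  rw [InnerProductSpace.integral_norm_pow_mul_exp_neg_norm_sq, finrank_euclideanSpace] at hmoment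
  set d := Fintype.card ι
  set c := ∫ x, x i ^ (2 * k) ∂ν
  have hsqrt : √π ^ d = √π * √π ^ (d - 1) := by
    rw [← pow_succ', Nat.sub_add_cancel Fintype.card_pos]
  have hhalf : ((2 * k : ℕ) + (d : ℝ)) / 2 = k + d / 2 := by push_cast; ring
  have hG : 0 < Gamma (d / 2) := Gamma_pos_of_pos (by positivity)
  rw [hhalf, hsqrt, mul_div_assoc', div_eq_iff hG.ne'] at hmoment
  have hc : c * (4 ^ k * k ! * Gamma (k + d / 2)) = r ^ (2 * k) * (2 * k)! * Gamma (d / 2) := by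
    refine mul_left_cancel₀ (by positivity : √π * √π ^ (d - 1) ≠ 0) ?_
    linear_combination (4 ^ k * k ! : ℝ) * hmoment +
      r ^ (2 * k) * √π ^ (d - 1) * Gamma (d / 2) * four_pow_mul_factorial_mul_Gamma_nat_add_half k
  rw [eq_div_iff (by positivity)]
  linear_combination ‖z‖ ^ (2 * k) * hc

theorem integral_cos_inner_of_measurePreserving [Nonempty ι]
    (hν : ∀ g : EuclideanSpace ℝ ι ≃ₗᵢ[ℝ] EuclideanSpace ℝ ι, MeasurePreserving g ν ν)
    {r : ℝ} (hr : ∀ᵐ x ∂ν, ‖x‖ = r) (z : EuclideanSpace ℝ ι) :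
    ∫ x, cos ⟪x, z⟫_ℝ ∂ν = ∑' k : ℕ, (-1) ^ k * ‖z‖ ^ (2 * k) * (r ^ 2) ^ k *
      Gamma (Fintype.card ι / 2) / (4 ^ k * k ! * Gamma (k + Fintype.card ι / 2)) := by
  set term : ℕ → EuclideanSpace ℝ ι → ℝ := fun k x => (-1) ^ k * ⟪x, z⟫_ℝ ^ (2 * k) / (2 * k)!
  have hbound : ∀ k, ∀ᵐ x ∂ν, ‖term k x‖ ≤ (r * ‖z‖) ^ (2 * k) / (2 * k)! := fun k =>
    hr.mono fun x hx => by
      rw [norm_div, norm_mul, norm_pow, norm_neg, norm_one, one_pow, one_mul, norm_pow,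
        Real.norm_natCast, ← hx]
      gcongr
      exact abs_real_inner_le_norm x z
  have hint : ∀ k, Integrable (term k) ν := fun k =>
    (integrable_const _).mono' (by fun_prop : Continuous (term k)).aestronglyMeasurable (hbound k)
  have hsum : Summable fun k => ∫ x, ‖term k x‖ ∂ν := by
    refine .of_nonneg_of_le (fun k => integral_nonneg fun x => norm_nonneg _) (fun k => ?_)
      ((summable_pow_div_factorial (r * ‖z‖)).comp_injective (mul_right_injective₀ two_ne_zero))
    simpa using integral_mono_ae (hint k).norm (integrable_const _) (hbound k)
  simp only [cos_eq_tsum]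
  rw [← integral_tsum_of_summable_integral_norm hint hsum]
  refine tsum_congr fun k => ?_
  rw [integral_div, integral_const_mul, integral_inner_pow_of_measurePreserving hν hr z k]
  field_simp
  ring

end EuclideanSpace

section OrthogonalGroup

variable {ι : Type*} [Fintype ι] [DecidableEq ι]

theorem LinearIsometryEquiv.exists_orthogonalGroup_mulVec
    (g : EuclideanSpace ℝ ι ≃ₗᵢ[ℝ] EuclideanSpace ℝ ι) :
    ∃ G : Matrix.orthogonalGroup ι ℝ, ∀ x : ι → ℝ,
      g (WithLp.toLp 2 x) = WithLp.toLp 2 ((G : Matrix ι ι ℝ) *ᵥ x) := by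
  let b := EuclideanSpace.basisFun ι ℝ
  refine ⟨⟨_, g.toMatrix_mem_unitaryGroup b b⟩, fun x => ?_⟩
  ext i
  exact (congrFun (LinearMap.toMatrix_mulVec_repr b.toBasis b.toBasis g.toLinearEquiv.toLinearMap
    (WithLp.toLp 2 x)) i).symm

namespace Matrix.orthogonalGroup

def orbitMap (v : ι → ℝ) (Q : orthogonalGroup ι ℝ) : EuclideanSpace ℝ ι :=
  WithLp.toLp 2 ((Q : Matrix ι ι ℝ) *ᵥ v)

theorem norm_orbitMap (v : ι → ℝ) (Q : orthogonalGroup ι ℝ) :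
    ‖orbitMap v Q‖ = ‖WithLp.toLp 2 v‖ := by
  have hQ : (Q : Matrix ι ι ℝ)ᵀ * Q = 1 := (mem_orthogonalGroup_iff' ι ℝ).1 Q.2
  rw [← sq_eq_sq₀ (norm_nonneg _) (norm_nonneg _), ← real_inner_self_eq_norm_sq,
    ← real_inner_self_eq_norm_sq, orbitMap, EuclideanSpace.inner_toLp_toLp,
    EuclideanSpace.inner_toLp_toLp, star_trivial, star_trivial, dotProduct_mulVec,
    ← mulVec_transpose, mulVec_mulVec, hQ, one_mulVec]

theorem inner_orbitMap (v : ι → ℝ) (Q : orthogonalGroup ι ℝ) (z : EuclideanSpace ℝ ι) :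
    ⟪orbitMap v Q, z⟫_ℝ = ∑ i, ((Q : Matrix ι ι ℝ) *ᵥ v) i * z i := by
  simp [orbitMap, EuclideanSpace.inner_eq_star_dotProduct, dotProduct, mul_comm]

theorem orbitMap_add_smul (v w : ι → ℝ) (a b : ℝ) (Q : orthogonalGroup ι ℝ) :
    orbitMap (a • v + b • w) Q = a • orbitMap v Q + b • orbitMap w Q := by
  simp [orbitMap, mulVec_add, mulVec_smul]

theorem cos_mul_cos_inner_orbitMap (v w : ι → ℝ) (a b : ℝ) (Q : orthogonalGroup ι ℝ)
    (z : EuclideanSpace ℝ ι) :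
    cos (a * ⟪orbitMap v Q, z⟫_ℝ) * cos (b * ⟪orbitMap w Q, z⟫_ℝ) =
      (cos ⟪orbitMap (a • v + b • w) Q, z⟫_ℝ + cos ⟪orbitMap (a • v + (-b) • w) Q, z⟫_ℝ) / 2 := by
  simp only [orbitMap_add_smul, inner_add_left, real_inner_smul_left, neg_mul, ← sub_eq_add_neg,
    cos_add, cos_sub]
  ring

variable [MeasurableSpace (Matrix ι ι ℝ)] [BorelSpace (Matrix ι ι ℝ)]
  {μ : Measure (orthogonalGroup ι ℝ)}

theorem measurable_orbitMap (v : ι → ℝ) : Measurable (orbitMap (ι := ι) v) := by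
  unfold orbitMap
  fun_prop

theorem measurePreserving_map_orbitMap
    (hinv : ∀ g : orthogonalGroup ι ℝ, μ.map (fun q => g * q) = μ) (v : ι → ℝ)
    (g : EuclideanSpace ℝ ι ≃ₗᵢ[ℝ] EuclideanSpace ℝ ι) :
    MeasurePreserving g (μ.map (orbitMap v)) (μ.map (orbitMap v)) := by
  obtain ⟨G, hG⟩ := g.exists_orthogonalGroup_mulVec
  have hcomm : g ∘ orbitMap v = orbitMap v ∘ fun Q => G * Q := by
    ext1 Q
    simp [orbitMap, hG, mulVec_mulVec]
  refine ⟨g.continuous.measurable, ?_⟩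
  rw [Measure.map_map g.continuous.measurable (measurable_orbitMap v), hcomm,
    ← Measure.map_map (measurable_orbitMap v) (continuous_const_mul G).measurable, hinv]

theorem ae_norm_eq_of_map_orbitMap (v : ι → ℝ) :
    ∀ᵐ x ∂(μ.map (orbitMap v)), ‖x‖ = ‖WithLp.toLp 2 v‖ :=
  (ae_map_iff (measurable_orbitMap v).aemeasurable
    (measurableSet_eq_fun measurable_norm measurable_const)).2
    (ae_of_all _ fun Q => norm_orbitMap v Q)

theorem integrable_cos_inner_orbitMap [IsFiniteMeasure μ] (v : ι → ℝ) (z : EuclideanSpace ℝ ι) :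
    Integrable (fun Q => cos ⟪orbitMap v Q, z⟫_ℝ) μ :=
  (integrable_const 1).mono'
    (continuous_cos.measurable.comp
      ((measurable_orbitMap v).inner measurable_const)).aestronglyMeasurable
    (ae_of_all _ fun _ => abs_cos_le_one _)

theorem integral_cos_inner_orbitMap [Nonempty ι] [IsProbabilityMeasure μ]
    (hinv : ∀ g : orthogonalGroup ι ℝ, μ.map (fun q => g * q) = μ) (v : ι → ℝ)
    (z : EuclideanSpace ℝ ι) :
    ∫ Q, cos ⟪orbitMap v Q, z⟫_ℝ ∂μ = ∑' k : ℕ, (-1) ^ k * ‖z‖ ^ (2 * k) *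
      (‖WithLp.toLp 2 v‖ ^ 2) ^ k * Gamma (Fintype.card ι / 2) /
        (4 ^ k * k ! * Gamma (k + Fintype.card ι / 2)) := by
  have := Measure.isProbabilityMeasure_map (μ := μ) (measurable_orbitMap v).aemeasurable
  rw [← integral_map (measurable_orbitMap v).aemeasurable (by fun_prop : Continuous fun x :
      EuclideanSpace ℝ ι => cos ⟪x, z⟫_ℝ).aestronglyMeasurable,
    EuclideanSpace.integral_cos_inner_of_measurePreserving
      (measurePreserving_map_orbitMap hinv v) (ae_norm_eq_of_map_orbitMap v) z]

end Matrix.orthogonalGroup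

end OrthogonalGroup

instance matrixBorelSpace (d : ℕ) : BorelSpace (Matrix (Fin d) (Fin d) ℝ) :=
  inferInstanceAs (BorelSpace (Fin d → Fin d → ℝ))

/-- Expected product of two random Fourier feature basis functions whose frequency
directions are the first two columns of a Haar-random orthogonal matrix (characterized
as a left-invariant Borel probability measure on `O(d)`), with fixed norms `a` and `b`. -/
theorem haar_orthogonal_cos_product (d : ℕ) (hd : 2 ≤ d)
    (μ : Measure (Matrix.orthogonalGroup (Fin d) ℝ)) [IsProbabilityMeasure μ]
    (hinv : ∀ g : Matrix.orthogonalGroup (Fin d) ℝ, μ.map (fun q => g * q) = μ)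
    (a b : ℝ) (z : EuclideanSpace ℝ (Fin d)) :
    ∫ Q : Matrix.orthogonalGroup (Fin d) ℝ,
        Real.cos (a * ∑ i,
            ((Q : Matrix (Fin d) (Fin d) ℝ).mulVec (Pi.single (⟨0, by omega⟩ : Fin d) 1)) i
              * z i) *
        Real.cos (b * ∑ i,
            ((Q : Matrix (Fin d) (Fin d) ℝ).mulVec (Pi.single (⟨1, by omega⟩ : Fin d) 1)) i
              * z i) ∂μ =
      ∑' k : ℕ,
        (-1 : ℝ) ^ k * ‖z‖ ^ (2 * k) * (a ^ 2 + b ^ 2) ^ k * Real.Gamma ((d : ℝ) / 2) /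
          (4 ^ k * (Nat.factorial k) * Real.Gamma ((k : ℝ) + d / 2)) := by
  set e₀ : Fin d → ℝ := Pi.single ⟨0, by omega⟩ 1
  set e₁ : Fin d → ℝ := Pi.single ⟨1, by omega⟩ 1
  have : Nonempty (Fin d) := ⟨⟨0, by omega⟩⟩
  have hnorm : ∀ c : ℝ, ‖WithLp.toLp 2 (a • e₀ + c • e₁)‖ ^ 2 = a ^ 2 + c ^ 2 := fun c => by
    simp [e₀, e₁, EuclideanSpace.real_norm_sq_eq, add_sq, Finset.sum_add_distrib]
  simp only [← Matrix.orthogonalGroup.inner_orbitMap,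
    Matrix.orthogonalGroup.cos_mul_cos_inner_orbitMap]
  rw [integral_div, integral_add (Matrix.orthogonalGroup.integrable_cos_inner_orbitMap _ z)
      (Matrix.orthogonalGroup.integrable_cos_inner_orbitMap _ z),
    Matrix.orthogonalGroup.integral_cos_inner_orbitMap hinv,
    Matrix.orthogonalGroup.integral_cos_inner_orbitMap hinv, hnorm, hnorm, neg_sq,
    Fintype.card_fin, add_self_div_two]

end
end

section
/- Let η be an atomless Borel probability measure on ℝ with cumulative distribution function F, and let μ be a probability measure on ℝ × ℝ whose two marginals both equal η. Suppose the topological support of μ is antitone: for all (x₁,y₁), (x₂,y₂) in the support of μ, x₁ < x₂ implies y₁ ≥ y₂. Then every point (x₀, y₀) in the support of μ satisfies F(x₀) + F(y₀) = 1. -/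
open MeasureTheory

noncomputable section

/-- The topological support of a measure on `ℝ × ℝ`: the smallest closed set of full
measure (the intersection of all closed sets whose complement is null). -/
def msupport (μ : Measure (ℝ × ℝ)) : Set (ℝ × ℝ) :=
  ⋂₀ {C : Set (ℝ × ℝ) | IsClosed C ∧ μ Cᶜ = 0}

lemma msupport_compl_null (μ : Measure (ℝ × ℝ)) : μ (msupport μ)ᶜ = 0 := by
  have hcompl : (msupport μ)ᶜ = ⋃₀ {U : Set (ℝ × ℝ) | IsOpen U ∧ μ U = 0} := by
    ext p
    simp only [msupport, Set.mem_compl_iff, Set.mem_sInter, Set.mem_setOf_eq, not_forall,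
      Set.mem_sUnion]
    constructor
    · rintro ⟨C, ⟨hC, hCn⟩, hp⟩
      exact ⟨Cᶜ, ⟨hC.isOpen_compl, hCn⟩, hp⟩
    · rintro ⟨U, ⟨hU, hUn⟩, hp⟩
      exact ⟨Uᶜ, ⟨⟨hU.isClosed_compl, by simpa using hUn⟩, by simpa using hp⟩⟩
  obtain ⟨T, hTc, hTsub, hTU⟩ := TopologicalSpace.isOpen_sUnion_countable
    {U : Set (ℝ × ℝ) | IsOpen U ∧ μ U = 0} (fun s hs => hs.1)
  rw [hcompl, ← hTU]
  exact (measure_sUnion_null_iff hTc).2 fun t ht => (hTsub ht).2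

/-- If a coupling of an atomless probability measure `η` with itself has antitone support,
then every point `(x₀, y₀)` of the support satisfies `F(x₀) + F(y₀) = 1`, where `F` is the
cumulative distribution function of `η`. -/
theorem antitone_support_cdf_sum_one (η : Measure ℝ) [IsProbabilityMeasure η]
    (hatomless : ∀ x : ℝ, η {x} = 0)
    (μ : Measure (ℝ × ℝ)) [IsProbabilityMeasure μ]
    (h1 : μ.map Prod.fst = η) (h2 : μ.map Prod.snd = η)
    (hanti : ∀ p ∈ msupport μ, ∀ q ∈ msupport μ, p.1 < q.1 → q.2 ≤ p.2) :
    ∀ p ∈ msupport μ,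
      (η (Set.Iic p.1)).toReal + (η (Set.Iic p.2)).toReal = 1 := by
  intro p hp
  set Sx : Set (ℝ × ℝ) := Prod.fst ⁻¹' Set.Iic p.1 with hSx
  set Sy : Set (ℝ × ℝ) := Prod.snd ⁻¹' Set.Iic p.2 with hSy
  have hx : η (Set.Iic p.1) = μ Sx := by
    rw [← h1, Measure.map_apply measurable_fst measurableSet_Iic]
  have hy : η (Set.Iic p.2) = μ Sy := by
    rw [← h2, Measure.map_apply measurable_snd measurableSet_Iic]
  have hsupp := msupport_compl_null μ
  -- union has full measure
  have hunion : μ (Sx ∪ Sy) = 1 := by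
    have hsub : (Sx ∪ Sy)ᶜ ⊆ (msupport μ)ᶜ := by
      intro q hq
      simp only [Set.mem_compl_iff, Set.mem_union, not_or, hSx, hSy, Set.mem_preimage,
        Set.mem_Iic, not_le] at hq
      intro hqs
      exact absurd (hanti p hp q hqs hq.1) (not_le.2 hq.2)
    have : μ (Sx ∪ Sy)ᶜ = 0 := measure_mono_null hsub hsupp
    exact (prob_compl_eq_zero_iff ((measurableSet_Iic.preimage measurable_fst).union
      (measurableSet_Iic.preimage measurable_snd))).1 this
  -- intersection is null
  have hinter : μ (Sx ∩ Sy) = 0 := by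
    have hsub : Sx ∩ Sy ⊆ (msupport μ)ᶜ ∪ (Prod.fst ⁻¹' {p.1} ∪ Prod.snd ⁻¹' {p.2}) := by
      intro q hq
      by_cases hqs : q ∈ msupport μ
      · right
        have hq1 : q.1 ≤ p.1 := hq.1
        have hq2 : q.2 ≤ p.2 := hq.2
        rcases lt_or_eq_of_le hq1 with h | h
        · right
          have := hanti q hqs p hp h
          exact le_antisymm hq2 this
        · exact Or.inl h
      · exact Or.inl hqs
    refine measure_mono_null hsub ?_
    refine measure_union_null hsupp (measure_union_null ?_ ?_)
    · rw [← Measure.map_apply measurable_fst (measurableSet_singleton _), h1]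
      exact hatomless _
    · rw [← Measure.map_apply measurable_snd (measurableSet_singleton _), h2]
      exact hatomless _
  have hadd : μ Sx + μ Sy = 1 := by
    have h := measure_union_add_inter (μ := μ) Sx
      (show MeasurableSet Sy from measurableSet_Iic.preimage measurable_snd)
    rw [hunion, hinter, add_zero] at h
    exact h.symm
  have hfx : μ Sx ≠ ⊤ := (measure_lt_top μ _).ne
  have hfy : μ Sy ≠ ⊤ := (measure_lt_top μ _).ne
  rw [hx, hy, ← ENNReal.toReal_add hfx hfy, hadd, ENNReal.toReal_one]
end
end

section
/- Let n ≥ 1 and let C be any real n × n cost matrix. Then there exists a permutation σ of {1, …, n} such that for every doubly stochastic n × n matrix B, Σ_{i=1}^n C_{i, σ(i)} ≤ Σ_{i=1}^n Σ_{j=1}^n B_{ij} C_{ij}. In other words, the minimum of the linear functional B ↦ Σ_{ij} B_{ij} C_{ij} over the set of doubly stochastic matrices is attained at a permutation matrix. -/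
open Finset Matrix

/-- The minimum of the linear functional `B ↦ Σ_{ij} B_{ij} C_{ij}` over doubly stochastic
matrices is attained at a permutation matrix: there is a permutation `σ` with
`Σ_i C_{i σ(i)} ≤ Σ_{ij} B_{ij} C_{ij}` for every doubly stochastic `B`. -/
theorem exists_perm_min_over_doublyStochastic (n : ℕ) (hn : 1 ≤ n)
    (C : Matrix (Fin n) (Fin n) ℝ) :
    ∃ σ : Equiv.Perm (Fin n),
      ∀ B : Matrix (Fin n) (Fin n) ℝ,
        (∀ i j, 0 ≤ B i j) → (∀ i, ∑ j, B i j = 1) → (∀ j, ∑ i, B i j = 1) →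
          ∑ i, C i (σ i) ≤ ∑ i, ∑ j, B i j * C i j := by
  classical
  -- the linear functional
  set f : Matrix (Fin n) (Fin n) ℝ → ℝ := fun M => ∑ i, ∑ j, M i j * C i j with hf
  have hflin : ∀ (a b : ℝ) (M N : Matrix (Fin n) (Fin n) ℝ),
      f (a • M + b • N) = a * f M + b * f N := by
    intro a b M N
    simp only [hf, Matrix.add_apply, Matrix.smul_apply, smul_eq_mul, add_mul, mul_assoc,
      Finset.sum_add_distrib, Finset.mul_sum]
  -- pick σ minimizing f over permutation matrices
  obtain ⟨σ, -, hσ⟩ := Finset.exists_min_image (Finset.univ : Finset (Equiv.Perm (Fin n)))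
    (fun σ => f (σ.permMatrix ℝ)) ⟨1, Finset.mem_univ 1⟩
  refine ⟨σ, fun B hB1 hB2 hB3 => ?_⟩
  have hBmem : B ∈ doublyStochastic ℝ (Fin n) :=
    mem_doublyStochastic_iff_sum.2 ⟨hB1, hB2, hB3⟩
  have key : f (σ.permMatrix ℝ) ≤ f B := by
    have hBmem' : B ∈ (doublyStochastic ℝ (Fin n) : Set _) := hBmem
    rw [doublyStochastic_eq_convexHull_permMatrix] at hBmem'
    have hsub : {M : Matrix (Fin n) (Fin n) ℝ | ∃ τ : Equiv.Perm (Fin n), τ.permMatrix ℝ = M}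
        ⊆ {M | f (σ.permMatrix ℝ) ≤ f M} := by
      rintro M ⟨τ, rfl⟩
      exact hσ τ (Finset.mem_univ τ)
    have hconv : Convex ℝ {M : Matrix (Fin n) (Fin n) ℝ | f (σ.permMatrix ℝ) ≤ f M} := by
      intro x hx y hy a b ha hb hab
      simp only [Set.mem_setOf_eq] at hx hy ⊢
      calc f (σ.permMatrix ℝ) = a * f (σ.permMatrix ℝ) + b * f (σ.permMatrix ℝ) := by
            rw [← add_mul, hab, one_mul]
        _ ≤ a * f x + b * f y := by
            gcongr
        _ = f (a • x + b • y) := (hflin a b x y).symm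
    exact convexHull_min hsub hconv hBmem'
  have hperm : f (σ.permMatrix ℝ) = ∑ i, C i (σ i) := by
    simp [hf, Equiv.Perm.permMatrix, PEquiv.toMatrix_apply, Equiv.toPEquiv_apply,
      Option.mem_def, eq_comm]
  rw [← hperm]
  exact key
end
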